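/- In ℝ², the first nontrivial Neumann eigenvalue (with respect to Gaussian measure) of the square T = (√(3−√6), √(3+√6))² equals 5; in particular, u(x,y) = x⁵ − 10x³ + 15x is a nonconstant eigenfunction with Gaussian mean zero on T, satisfying −Δu + (x,y)·∇u = 5u in T and ∂u/∂ν = 0 on ∂T. -/

import Mathlib

open Real Set MeasureTheory

/-!
The Gaussian density `ρ` and `He₅(x) = x⁵ - 10x³ + 15x` satisfy `(ρ He₅')' = -5 ρ He₅`, and `He₅'`
vanishes at `√(3 ∓ √6)`: `He₅` is a Neumann eigenfunction on `I = (√(3 - √6), √(3 + √6))` with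
eigenvalue `5` and a single node `c = √(5 - √10)` in `I`. Picone's identity for
`F = ρ He₅' h² / He₅` gives `∫_I ρ (h'² - 5 h²) ≥ 0` for every `h` with `h c = 0`; subtracting
`w c` then yields the sharp Poincaré inequality `5 ∫_I w² ρ ≤ ∫_I w'² ρ` for `ρ`-mean-zero `w`.
The Efron–Stein inequality `Var v ≤ E[Var_x v] + E[Var_y v]` for the product weight tensorizes it
to the square `I × I`, and `u(x, y) = He₅(x)` attains the bound.
-/

open Filter Topology ProbabilityTheory

theorem integrableOn_Ioo_of_continuous {a b : ℝ} {f : ℝ → ℝ} (hf : Continuous f) :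
    IntegrableOn f (Ioo a b) :=
  hf.integrableOn_Icc.mono_set Ioo_subset_Icc_self

theorem setIntegral_Ioo_eq_intervalIntegral {a b : ℝ} {f : ℝ → ℝ} (hab : a ≤ b) :
    ∫ x in Ioo a b, f x = ∫ x in a..b, f x := by
  rw [intervalIntegral.integral_of_le hab, integral_Ioc_eq_integral_Ioo]

theorem setIntegral_Ioo_pos {a b : ℝ} {f : ℝ → ℝ} (hab : a < b) (hf : Continuous f)
    (hf0 : ∀ x, 0 ≤ f x) {c : ℝ} (hc : c ∈ Icc a b) (hfc : 0 < f c) :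
    0 < ∫ x in Ioo a b, f x := by
  rw [setIntegral_Ioo_eq_intervalIntegral hab.le]
  exact intervalIntegral.integral_pos hab hf.continuousOn (fun x _ => hf0 x) ⟨c, hc, hfc⟩

def PoincareInequality (a b : ℝ) (ρ : ℝ → ℝ) (μ : ℝ) : Prop :=
  ∀ w : ℝ → ℝ, ContDiff ℝ 1 w → ∫ x in Ioo a b, w x * ρ x = 0 →
    μ * ∫ x in Ioo a b, w x ^ 2 * ρ x ≤ ∫ x in Ioo a b, deriv w x ^ 2 * ρ x

section SturmLiouville

variable {ρ g g' : ℝ → ℝ} {μ : ℝ}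

-- Where `g` vanishes the division returns `0`; at a common zero of `g` and `h` with `g' ≠ 0`
-- this is the continuous extension (`continuousAt_piconeFun`).
noncomputable def piconeFun (ρ g g' h : ℝ → ℝ) (x : ℝ) : ℝ := ρ x * g' x * h x ^ 2 / g x

theorem hasDerivAt_piconeFun {h : ℝ → ℝ} {h' x : ℝ} (hg : HasDerivAt g (g' x) x)
    (hρg : HasDerivAt (fun x => ρ x * g' x) (-(μ * ρ x * g x)) x) (hh : HasDerivAt h h' x)
    (hgx : g x ≠ 0) :
    HasDerivAt (piconeFun ρ g g' h)
      (ρ x * (h' ^ 2 - μ * h x ^ 2) - ρ x * (h' - g' x * h x / g x) ^ 2) x := by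
  refine ((hρg.mul (hh.pow 2)).div hg hgx).congr_deriv ?_
  simp only [Pi.mul_apply, Pi.pow_apply]
  field_simp
  ring

theorem continuousAt_piconeFun {h : ℝ → ℝ} {c : ℝ} (hρg : ContinuousAt (fun x => ρ x * g' x) c)
    (hg : HasDerivAt g (g' c) c) (hgc : g c = 0) (hg'c : g' c ≠ 0)
    (hh : DifferentiableAt ℝ h c) (hhc : h c = 0) : ContinuousAt (piconeFun ρ g g' h) c := by
  -- near the node, `h ^ 2 / g = (slope h c) ^ 2 * (x - c) / slope g c`
  have hlim : Tendsto (fun x => ρ x * g' x * (slope h c x ^ 2 * (x - c) / slope g c x))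
      (𝓝[≠] c) (𝓝 (ρ c * g' c * (deriv h c ^ 2 * (c - c) / g' c))) := by
    refine (hρg.tendsto.mono_left nhdsWithin_le_nhds).mul
      ((((hasDerivAt_iff_tendsto_slope.1 hh.hasDerivAt).pow 2).mul ?_).div
        (hasDerivAt_iff_tendsto_slope.1 hg) hg'c)
    exact ((continuous_id.sub continuous_const).tendsto c).mono_left nhdsWithin_le_nhds
  rw [← continuousWithinAt_compl_self, ContinuousWithinAt]
  convert hlim.congr' ?_ using 2
  · simp [piconeFun, hgc]
  · filter_upwards [self_mem_nhdsWithin] with x hx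
    have hxc : x - c ≠ 0 := sub_ne_zero.2 hx
    simp only [piconeFun, slope_def_field, hgc, hhc, sub_zero]
    rcases eq_or_ne (g x) 0 with h0 | h0
    · simp [h0]
    · field_simp

/-- `g`, with derivative `g'`, solves `-(ρ g')' = μ ρ g` with `g' a = g' b = 0`. -/
structure IsNeumannEigenfunction (ρ g g' : ℝ → ℝ) (μ a b : ℝ) : Prop where
  hasDerivAt : ∀ x, HasDerivAt g (g' x) x
  hasDerivAt_weight_mul : ∀ x, HasDerivAt (fun x => ρ x * g' x) (-(μ * ρ x * g x)) x
  deriv_left : g' a = 0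
  deriv_right : g' b = 0

namespace IsNeumannEigenfunction

variable {a b : ℝ}

theorem sub_piconeFun_le_integral (hg : IsNeumannEigenfunction ρ g g' μ a b) (hρ : Continuous ρ)
    (hρ0 : ∀ x, 0 ≤ ρ x) {h : ℝ → ℝ} (hh : ContDiff ℝ 1 h) {s t : ℝ} (hst : s ≤ t)
    (hF : ContinuousOn (piconeFun ρ g g' h) (Icc s t)) (hg0 : ∀ x ∈ Ioo s t, g x ≠ 0) :
    piconeFun ρ g g' h t - piconeFun ρ g g' h s ≤
      ∫ x in s..t, ρ x * (deriv h x ^ 2 - μ * h x ^ 2) := by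
  refine intervalIntegral.sub_le_integral_of_hasDeriv_right_of_le hst hF
    (fun x hx => (hasDerivAt_piconeFun (hg.hasDerivAt x) (hg.hasDerivAt_weight_mul x)
      (hh.differentiable one_ne_zero x).hasDerivAt (hg0 x hx)).hasDerivWithinAt)
    ((by fun_prop : Continuous _).integrableOn_Icc)
    fun x _ => ?_
  exact sub_le_self _ (mul_nonneg (hρ0 x) (sq_nonneg _))

theorem integral_mul_deriv_sq_sub_nonneg (hg : IsNeumannEigenfunction ρ g g' μ a b)
    (hρ : Continuous ρ) (hρ0 : ∀ x, 0 ≤ ρ x) {c : ℝ} (hac : a ≤ c) (hcb : c ≤ b) (hgc : g c = 0)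
    (hg'c : g' c ≠ 0) (hg0 : ∀ x ∈ Icc a b, x ≠ c → g x ≠ 0) {h : ℝ → ℝ} (hh : ContDiff ℝ 1 h)
    (hhc : h c = 0) :
    0 ≤ ∫ x in a..b, ρ x * (deriv h x ^ 2 - μ * h x ^ 2) := by
  have hF : ContinuousOn (piconeFun ρ g g' h) (Icc a b) := by
    intro x hx
    refine ContinuousAt.continuousWithinAt ?_
    rcases eq_or_ne x c with rfl | hxc
    · exact continuousAt_piconeFun (hg.hasDerivAt_weight_mul x).continuousAt (hg.hasDerivAt x)
        hgc hg'c (hh.differentiable one_ne_zero x) hhc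
    · exact (hasDerivAt_piconeFun (hg.hasDerivAt x) (hg.hasDerivAt_weight_mul x)
        (hh.differentiable one_ne_zero x).hasDerivAt (hg0 x hx hxc)).continuousAt
  have hleft := hg.sub_piconeFun_le_integral hρ hρ0 hh hac (hF.mono (Icc_subset_Icc_right hcb))
    fun x hx => hg0 x (Ioo_subset_Icc_self.trans (Icc_subset_Icc_right hcb) hx) hx.2.ne
  have hright := hg.sub_piconeFun_le_integral hρ hρ0 hh hcb (hF.mono (Icc_subset_Icc_left hac))
    fun x hx => hg0 x (Ioo_subset_Icc_self.trans (Icc_subset_Icc_left hac) hx) hx.1.ne'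
  have hint (s t : ℝ) :
      IntervalIntegrable (fun x => ρ x * (deriv h x ^ 2 - μ * h x ^ 2)) volume s t :=
    (by fun_prop : Continuous _).intervalIntegrable s t
  rw [← intervalIntegral.integral_add_adjacent_intervals (hint a c) (hint c b)]
  -- `piconeFun` vanishes at `a` and `b` because `g'` does, and at `c` because `g` does
  simp only [piconeFun, hg.deriv_left, hg.deriv_right, hgc, mul_zero, zero_mul, zero_div, div_zero,
    sub_zero] at hleft hright
  linarith

theorem continuous (hg : IsNeumannEigenfunction ρ g g' μ a b) : Continuous g :=
  continuous_iff_continuousAt.2 fun x => (hg.hasDerivAt x).continuousAt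

theorem integral_mul_weight_eq_zero (hg : IsNeumannEigenfunction ρ g g' μ a b)
    (hρ : Continuous ρ) (hμ : μ ≠ 0) (hab : a ≤ b) : ∫ x in Ioo a b, g x * ρ x = 0 := by
  have hgc := hg.continuous
  have hFTC := intervalIntegral.integral_eq_sub_of_hasDerivAt
    (fun x _ => hg.hasDerivAt_weight_mul x) ((by fun_prop : Continuous _).intervalIntegrable a b)
  have hzero : ∫ x in a..b, -μ * (g x * ρ x) = 0 := by
    calc _ = ∫ x in a..b, -(μ * ρ x * g x) := by congr 1 with x; ring
      _ = 0 := by rw [hFTC, hg.deriv_left, hg.deriv_right]; ring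
  rw [intervalIntegral.integral_const_mul, mul_eq_zero] at hzero
  rw [setIntegral_Ioo_eq_intervalIntegral hab]
  exact hzero.resolve_left (neg_ne_zero.2 hμ)

theorem integral_deriv_sq_mul_weight (hg : IsNeumannEigenfunction ρ g g' μ a b)
    (hρ : Continuous ρ) (hg' : Continuous g') (hab : a ≤ b) :
    ∫ x in Ioo a b, g' x ^ 2 * ρ x = μ * ∫ x in Ioo a b, g x ^ 2 * ρ x := by
  have hgc := hg.continuous
  have hFTC := intervalIntegral.integral_eq_sub_of_hasDerivAt
    (fun x _ => (hg.hasDerivAt_weight_mul x).mul (hg.hasDerivAt x))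
    ((by fun_prop : Continuous fun x => -(μ * ρ x * g x) * g x + ρ x * g' x * g' x)
      |>.intervalIntegrable a b)
  have hzero : ∫ x in a..b, (g' x ^ 2 * ρ x - μ * (g x ^ 2 * ρ x)) = 0 := by
    calc _ = ∫ x in a..b, (-(μ * ρ x * g x) * g x + ρ x * g' x * g' x) := by
          congr 1 with x; ring
      _ = 0 := by rw [hFTC]; simp [hg.deriv_left, hg.deriv_right]
  rw [intervalIntegral.integral_sub ((by fun_prop : Continuous _).intervalIntegrable a b)
    ((by fun_prop : Continuous _).intervalIntegrable a b), intervalIntegral.integral_const_mul,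
    sub_eq_zero] at hzero
  rwa [setIntegral_Ioo_eq_intervalIntegral hab, setIntegral_Ioo_eq_intervalIntegral hab]

theorem poincareInequality (hg : IsNeumannEigenfunction ρ g g' μ a b) (hρ : Continuous ρ)
    (hρ0 : ∀ x, 0 ≤ ρ x) (hμ : 0 ≤ μ) {c : ℝ} (hac : a ≤ c) (hcb : c ≤ b) (hgc : g c = 0)
    (hg'c : g' c ≠ 0) (hg0 : ∀ x ∈ Icc a b, x ≠ c → g x ≠ 0) : PoincareInequality a b ρ μ := by
  intro w hw hmean
  set k := w c
  have hpic := hg.integral_mul_deriv_sq_sub_nonneg hρ hρ0 hac hcb hgc hg'c hg0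
    (hw.sub contDiff_const) (sub_self k)
  rw [← setIntegral_Ioo_eq_intervalIntegral (hac.trans hcb)] at hpic
  -- shifting `w` by the constant `k` only adds mass, because `w` has mean zero
  have hexpand : ∫ x in Ioo a b, ρ x * (deriv (fun x => w x - k) x ^ 2 - μ * (w x - k) ^ 2) =
      (∫ x in Ioo a b, deriv w x ^ 2 * ρ x) - μ * (∫ x in Ioo a b, w x ^ 2 * ρ x)
        + 2 * μ * k * (∫ x in Ioo a b, w x * ρ x) - μ * k ^ 2 * ∫ x in Ioo a b, ρ x := by
    simp only [deriv_sub_const]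
    rw [← integral_const_mul, ← integral_const_mul, ← integral_const_mul,
      ← integral_sub, ← integral_add, ← integral_sub]
    · congr 1 with x
      ring
    all_goals exact integrableOn_Ioo_of_continuous (by fun_prop)
  have hmass : 0 ≤ ∫ x in Ioo a b, ρ x := setIntegral_nonneg measurableSet_Ioo fun x _ => hρ0 x
  rw [hexpand, hmean] at hpic
  nlinarith [mul_nonneg (mul_nonneg hμ (sq_nonneg k)) hmass]

end IsNeumannEigenfunction

end SturmLiouville

section Tensorization

variable {a b : ℝ} {ρ : ℝ → ℝ}

theorem integrableOn_Ioo_prod_of_continuous {f : ℝ × ℝ → ℝ} (hf : Continuous f) :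
    IntegrableOn f (Ioo a b ×ˢ Ioo a b) :=
  (hf.continuousOn.integrableOn_compact (isCompact_Icc.prod isCompact_Icc)).mono_set
    (prod_mono Ioo_subset_Icc_self Ioo_subset_Icc_self)

theorem continuous_setIntegral_Ioo {F : ℝ → ℝ → ℝ} (hF : Continuous (Function.uncurry F)) :
    Continuous fun x => ∫ y in Ioo a b, F x y := by
  simp_rw [← integral_Icc_eq_integral_Ioo]
  exact continuous_parametric_integral_of_continuous hF isCompact_Icc

theorem setIntegral_Ioo_prod_swap (f : ℝ × ℝ → ℝ) :
    ∫ p in Ioo a b ×ˢ Ioo a b, f p.swap = ∫ p in Ioo a b ×ˢ Ioo a b, f p := by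
  rw [Measure.volume_eq_prod]
  exact setIntegral_prod_swap _ _ f

theorem setIntegral_Ioo_prod_weight_eq_iterated {f : ℝ × ℝ → ℝ} (hf : Continuous f)
    (hρ : Continuous ρ) :
    ∫ p in Ioo a b ×ˢ Ioo a b, f p * (ρ p.1 * ρ p.2) =
      ∫ x in Ioo a b, (∫ y in Ioo a b, f (x, y) * ρ y) * ρ x := by
  rw [Measure.volume_eq_prod, setIntegral_prod _
    (by rw [← Measure.volume_eq_prod]; exact integrableOn_Ioo_prod_of_continuous (by fun_prop))]
  congr 1 with x
  rw [← integral_mul_const]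
  congr 1 with y
  ring

theorem setIntegral_Ioo_prod_weight_eq_iterated_swap {f : ℝ × ℝ → ℝ} (hf : Continuous f)
    (hρ : Continuous ρ) :
    ∫ p in Ioo a b ×ˢ Ioo a b, f p * (ρ p.1 * ρ p.2) =
      ∫ y in Ioo a b, (∫ x in Ioo a b, f (x, y) * ρ x) * ρ y := by
  have hswap := setIntegral_Ioo_prod_weight_eq_iterated (a := a) (b := b)
    (f := fun p => f p.swap) (by fun_prop) hρ
  simp only [Prod.swap_prod_mk] at hswap
  rw [← hswap, ← setIntegral_Ioo_prod_swap]
  congr 1 with p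
  simp only [Prod.fst_swap, Prod.snd_swap]
  ring

theorem setIntegral_Ioo_prod_fst_mul_weight (f : ℝ → ℝ) :
    ∫ p in Ioo a b ×ˢ Ioo a b, f p.1 * (ρ p.1 * ρ p.2) =
      (∫ x in Ioo a b, f x * ρ x) * ∫ y in Ioo a b, ρ y := by
  simp_rw [← mul_assoc]
  rw [Measure.volume_eq_prod]
  exact setIntegral_prod_mul (fun x => f x * ρ x) ρ _ _

theorem ContDiff.continuous_deriv_slice_fst {v : ℝ × ℝ → ℝ} (hv : ContDiff ℝ 1 v) :
    Continuous fun p : ℝ × ℝ => deriv (fun x => v (x, p.2)) p.1 := by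
  have hslice : ∀ p : ℝ × ℝ, deriv (fun x => v (x, p.2)) p.1 = fderiv ℝ v p (1, 0) := fun p =>
    ((hv.differentiable one_ne_zero p).hasFDerivAt.comp_hasDerivAt p.1
      ((hasDerivAt_id p.1).prodMk (hasDerivAt_const p.1 p.2))).deriv
  simp_rw [hslice]
  exact (hv.continuous_fderiv one_ne_zero).clm_apply continuous_const

-- `(∫ ρ) • Var f` for the probability measure `ρ dx / ∫ ρ` on `(a, b)`
noncomputable def weightedVar (a b : ℝ) (ρ f : ℝ → ℝ) : ℝ :=
  (∫ x in Ioo a b, f x ^ 2 * ρ x) - (∫ x in Ioo a b, f x * ρ x) ^ 2 / ∫ x in Ioo a b, ρ x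

theorem weightedVar_eq_integral_sub_mean_sq (hρ : Continuous ρ) (hC : (∫ x in Ioo a b, ρ x) ≠ 0)
    {f : ℝ → ℝ} (hf : Continuous f) :
    weightedVar a b ρ f = ∫ x in Ioo a b,
      (f x - (∫ t in Ioo a b, f t * ρ t) / ∫ t in Ioo a b, ρ t) ^ 2 * ρ x := by
  have hexpand (m : ℝ) : ∫ x in Ioo a b, (f x - m) ^ 2 * ρ x = (∫ x in Ioo a b, f x ^ 2 * ρ x)
      - 2 * m * (∫ x in Ioo a b, f x * ρ x) + m ^ 2 * ∫ x in Ioo a b, ρ x := by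
    rw [← integral_const_mul, ← integral_const_mul, ← integral_sub, ← integral_add]
    · congr 1 with x
      ring
    all_goals exact integrableOn_Ioo_of_continuous (by fun_prop)
  rw [hexpand, weightedVar]
  field_simp
  ring

theorem weightedVar_nonneg (hρ : Continuous ρ) (hρ0 : ∀ x, 0 ≤ ρ x)
    (hC : (∫ x in Ioo a b, ρ x) ≠ 0) {f : ℝ → ℝ} (hf : Continuous f) : 0 ≤ weightedVar a b ρ f := by
  rw [weightedVar_eq_integral_sub_mean_sq hρ hC hf]
  exact setIntegral_nonneg measurableSet_Ioo fun x _ => mul_nonneg (sq_nonneg _) (hρ0 x)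

theorem PoincareInequality.mul_weightedVar_le {μ : ℝ} (hP : PoincareInequality a b ρ μ)
    (hρ : Continuous ρ) (hC : (∫ x in Ioo a b, ρ x) ≠ 0) {f : ℝ → ℝ} (hf : ContDiff ℝ 1 f) :
    μ * weightedVar a b ρ f ≤ ∫ x in Ioo a b, deriv f x ^ 2 * ρ x := by
  have hfc := hf.continuous
  rw [weightedVar_eq_integral_sub_mean_sq hρ hC hfc]
  set m := (∫ t in Ioo a b, f t * ρ t) / ∫ t in Ioo a b, ρ t with hm
  have hmean : ∫ x in Ioo a b, (f x - m) * ρ x = 0 := by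
    simp_rw [sub_mul]
    rw [integral_sub (integrableOn_Ioo_of_continuous (by fun_prop))
      (integrableOn_Ioo_of_continuous (by fun_prop)), integral_const_mul, hm]
    field_simp
    ring
  simpa only [deriv_sub_const] using hP _ (hf.sub contDiff_const) hmean

theorem integral_weightedVar_slice_snd_mul_weight (hρ : Continuous ρ) {v : ℝ × ℝ → ℝ}
    (hv : Continuous v) :
    ∫ x in Ioo a b, weightedVar a b ρ (fun y => v (x, y)) * ρ x =
      (∫ p in Ioo a b ×ˢ Ioo a b, v p ^ 2 * (ρ p.1 * ρ p.2)) -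
        ∫ x in Ioo a b, (∫ y in Ioo a b, v (x, y) * ρ y) ^ 2 / (∫ y in Ioo a b, ρ y) * ρ x := by
  have hmean : Continuous fun x => ∫ y in Ioo a b, v (x, y) * ρ y :=
    continuous_setIntegral_Ioo (F := fun x y => v (x, y) * ρ y) (by fun_prop)
  have hsq : Continuous fun x => ∫ y in Ioo a b, v (x, y) ^ 2 * ρ y :=
    continuous_setIntegral_Ioo (F := fun x y => v (x, y) ^ 2 * ρ y) (by fun_prop)
  rw [setIntegral_Ioo_prod_weight_eq_iterated (by fun_prop) hρ, ← integral_sub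
    (integrableOn_Ioo_of_continuous (by fun_prop)) (integrableOn_Ioo_of_continuous (by fun_prop))]
  congr 1 with x
  rw [weightedVar]
  ring

-- Efron–Stein inequality for two coordinates
theorem integral_sq_le_integral_weightedVar_add (hρ : Continuous ρ) (hρ0 : ∀ x, 0 ≤ ρ x)
    (hC : 0 < ∫ x in Ioo a b, ρ x) {v : ℝ × ℝ → ℝ} (hv : Continuous v)
    (hmean : ∫ p in Ioo a b ×ˢ Ioo a b, v p * (ρ p.1 * ρ p.2) = 0) :
    ∫ p in Ioo a b ×ˢ Ioo a b, v p ^ 2 * (ρ p.1 * ρ p.2) ≤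
      (∫ y in Ioo a b, weightedVar a b ρ (fun x => v (x, y)) * ρ y) +
        ∫ x in Ioo a b, weightedVar a b ρ (fun y => v (x, y)) * ρ x := by
  have hB := integral_weightedVar_slice_snd_mul_weight (a := a) (b := b) hρ hv
  set C := ∫ x in Ioo a b, ρ x
  set m : ℝ → ℝ := fun y => ∫ x in Ioo a b, v (x, y) * ρ x
  set n : ℝ → ℝ := fun x => ∫ y in Ioo a b, v (x, y) * ρ y
  have hm : Continuous m :=
    continuous_setIntegral_Ioo (F := fun y x => v (x, y) * ρ x) (by fun_prop)
  have hn : Continuous n :=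
    continuous_setIntegral_Ioo (F := fun x y => v (x, y) * ρ y) (by fun_prop)
  set u : ℝ × ℝ → ℝ := fun p => v p - m p.2 / C with hu_def
  have hA : ∫ y in Ioo a b, weightedVar a b ρ (fun x => v (x, y)) * ρ y =
      ∫ p in Ioo a b ×ˢ Ioo a b, u p ^ 2 * (ρ p.1 * ρ p.2) := by
    rw [setIntegral_Ioo_prod_weight_eq_iterated_swap (by fun_prop) hρ]
    congr 1 with y
    rw [weightedVar_eq_integral_sub_mean_sq hρ hC.ne' (by fun_prop)]
  -- centring in `x` leaves the `y`-means unchanged, because `v` has mean zero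
  have hun (x : ℝ) : ∫ y in Ioo a b, u (x, y) * ρ y = n x := by
    have hm0 : ∫ y in Ioo a b, m y * ρ y = 0 := by
      rw [← hmean, setIntegral_Ioo_prod_weight_eq_iterated_swap hv hρ]
    simp only [hu_def, sub_mul]
    rw [integral_sub (integrableOn_Ioo_of_continuous (by fun_prop))
      (integrableOn_Ioo_of_continuous (by fun_prop))]
    simp_rw [div_mul_eq_mul_div]
    rw [integral_div, hm0, zero_div, sub_zero]
  have hCS : ∫ x in Ioo a b, n x ^ 2 / C * ρ x ≤
      ∫ p in Ioo a b ×ˢ Ioo a b, u p ^ 2 * (ρ p.1 * ρ p.2) := by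
    have husq : Continuous fun x => ∫ y in Ioo a b, u (x, y) ^ 2 * ρ y :=
      continuous_setIntegral_Ioo (F := fun x y => u (x, y) ^ 2 * ρ y) (by fun_prop)
    rw [setIntegral_Ioo_prod_weight_eq_iterated (by fun_prop) hρ]
    refine setIntegral_mono_on (integrableOn_Ioo_of_continuous (by fun_prop))
      (integrableOn_Ioo_of_continuous (by fun_prop)) measurableSet_Ioo
      fun x _ => mul_le_mul_of_nonneg_right ?_ (hρ0 x)
    have hvar := weightedVar_nonneg hρ hρ0 hC.ne' (f := fun y => u (x, y)) (by fun_prop)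
    rwa [weightedVar, hun x, sub_nonneg] at hvar
  linarith

theorem PoincareInequality.mul_integral_weightedVar_le {μ : ℝ} (hP : PoincareInequality a b ρ μ)
    (hμ : 0 ≤ μ) (hρ : Continuous ρ) (hρ0 : ∀ x, 0 ≤ ρ x) (hC : 0 < ∫ x in Ioo a b, ρ x)
    {v : ℝ × ℝ → ℝ} (hv : ContDiff ℝ 1 v) :
    μ * ∫ y in Ioo a b, weightedVar a b ρ (fun x => v (x, y)) * ρ y ≤
      ∫ p in Ioo a b ×ˢ Ioo a b, deriv (fun x => v (x, p.2)) p.1 ^ 2 * (ρ p.1 * ρ p.2) := by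
  have hd := hv.continuous_deriv_slice_fst
  have hslice (y : ℝ) : ContDiff ℝ 1 fun x => v (x, y) :=
    hv.comp (contDiff_id.prodMk contDiff_const)
  rw [setIntegral_Ioo_prod_weight_eq_iterated_swap (by fun_prop) hρ, ← integral_const_mul]
  refine integral_mono_of_nonneg (ae_of_all _ fun y => ?_) (integrableOn_Ioo_of_continuous ?_)
    (ae_of_all _ fun y => ?_)
  · exact mul_nonneg hμ
      (mul_nonneg (weightedVar_nonneg hρ hρ0 hC.ne' (hslice y).continuous) (hρ0 y))
  · refine (continuous_setIntegral_Ioo (F := fun y x => deriv (fun x => v (x, y)) x ^ 2 * ρ x)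
      ?_).mul hρ
    exact ((hd.comp continuous_swap).pow 2).mul (hρ.comp continuous_snd)
  · dsimp only
    rw [← mul_assoc]
    exact mul_le_mul_of_nonneg_right (hP.mul_weightedVar_le hρ hC.ne' (hslice y)) (hρ0 y)

theorem PoincareInequality.prod {μ : ℝ} (hP : PoincareInequality a b ρ μ) (hμ : 0 ≤ μ)
    (hρ : Continuous ρ) (hρ0 : ∀ x, 0 ≤ ρ x) (hC : 0 < ∫ x in Ioo a b, ρ x)
    {v : ℝ × ℝ → ℝ} (hv : ContDiff ℝ 1 v)
    (hmean : ∫ p in Ioo a b ×ˢ Ioo a b, v p * (ρ p.1 * ρ p.2) = 0) :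
    μ * ∫ p in Ioo a b ×ˢ Ioo a b, v p ^ 2 * (ρ p.1 * ρ p.2) ≤
      ∫ p in Ioo a b ×ˢ Ioo a b, (deriv (fun x => v (x, p.2)) p.1 ^ 2 +
        deriv (fun y => v (p.1, y)) p.2 ^ 2) * (ρ p.1 * ρ p.2) := by
  have hx := hP.mul_integral_weightedVar_le hμ hρ hρ0 hC hv
  have hvs : ContDiff ℝ 1 fun p : ℝ × ℝ => v (p.2, p.1) :=
    hv.comp (contDiff_snd.prodMk contDiff_fst)
  have hy := hP.mul_integral_weightedVar_le hμ hρ hρ0 hC hvs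
  have hswap : ∫ p in Ioo a b ×ˢ Ioo a b,
      deriv (fun x => v (p.2, x)) p.1 ^ 2 * (ρ p.1 * ρ p.2) =
      ∫ p in Ioo a b ×ˢ Ioo a b, deriv (fun y => v (p.1, y)) p.2 ^ 2 * (ρ p.1 * ρ p.2) := by
    rw [← setIntegral_Ioo_prod_swap]
    congr 1 with p
    simp only [Prod.fst_swap, Prod.snd_swap, mul_comm]
  have hd₁ := hv.continuous_deriv_slice_fst
  have hd₂ := hvs.continuous_deriv_slice_fst.comp continuous_swap
  simp only [Function.comp_def, Prod.fst_swap, Prod.snd_swap] at hd₂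
  simp_rw [add_mul]
  rw [integral_add (integrableOn_Ioo_prod_of_continuous (by fun_prop))
    (integrableOn_Ioo_prod_of_continuous (by fun_prop)), ← hswap]
  have hES := mul_le_mul_of_nonneg_left
    (integral_sq_le_integral_weightedVar_add hρ hρ0 hC hv.continuous hmean) hμ
  linarith

theorem IsNeumannEigenfunction.setIntegral_prod_fst_mul_weight_eq_zero {g g' : ℝ → ℝ} {μ : ℝ}
    (hg : IsNeumannEigenfunction ρ g g' μ a b) (hρ : Continuous ρ) (hμ : μ ≠ 0) (hab : a ≤ b) :
    ∫ p in Ioo a b ×ˢ Ioo a b, g p.1 * (ρ p.1 * ρ p.2) = 0 := by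
  rw [setIntegral_Ioo_prod_fst_mul_weight, hg.integral_mul_weight_eq_zero hρ hμ hab, zero_mul]

theorem IsNeumannEigenfunction.isLeast_rayleighQuotient {g g' : ℝ → ℝ} {μ : ℝ}
    (hg : IsNeumannEigenfunction ρ g g' μ a b) (hρ : Continuous ρ) (hρpos : ∀ x, 0 < ρ x)
    (hg' : Continuous g') (hμ : 0 < μ) {c : ℝ} (hac : a < c) (hcb : c ≤ b) (hgc : g c = 0)
    (hg'c : g' c ≠ 0) (hg0 : ∀ x ∈ Icc a b, x ≠ c → g x ≠ 0) :
    IsLeast {q : ℝ | ∃ v : ℝ × ℝ → ℝ, ContDiff ℝ 1 v ∧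
        (∫ p in Ioo a b ×ˢ Ioo a b, v p * (ρ p.1 * ρ p.2)) = 0 ∧
        (∫ p in Ioo a b ×ˢ Ioo a b, v p ^ 2 * (ρ p.1 * ρ p.2)) ≠ 0 ∧
        q = (∫ p in Ioo a b ×ˢ Ioo a b, (deriv (fun x => v (x, p.2)) p.1 ^ 2 +
              deriv (fun y => v (p.1, y)) p.2 ^ 2) * (ρ p.1 * ρ p.2)) /
            ∫ p in Ioo a b ×ˢ Ioo a b, v p ^ 2 * (ρ p.1 * ρ p.2)} μ := by
  have hab : a < b := hac.trans_le hcb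
  have hρ0 (x : ℝ) : 0 ≤ ρ x := (hρpos x).le
  have hmass : 0 < ∫ x in Ioo a b, ρ x :=
    setIntegral_Ioo_pos hab hρ hρ0 (left_mem_Icc.2 hab.le) (hρpos a)
  have hnorm : 0 < ∫ x in Ioo a b, g x ^ 2 * ρ x := by
    have hga : g a ≠ 0 := hg0 a (left_mem_Icc.2 hab.le) hac.ne
    exact setIntegral_Ioo_pos hab (by have := hg.continuous; fun_prop)
      (fun x => mul_nonneg (sq_nonneg _) (hρ0 x)) (left_mem_Icc.2 hab.le)
      (mul_pos (by positivity) (hρpos a))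
  have hderiv : deriv g = g' := funext fun x => (hg.hasDerivAt x).deriv
  refine ⟨⟨fun p => g p.1, (contDiff_one_iff_deriv.2 ⟨fun x => (hg.hasDerivAt x).differentiableAt,
      hderiv ▸ hg'⟩).comp contDiff_fst, hg.setIntegral_prod_fst_mul_weight_eq_zero hρ hμ.ne' hab.le,
      ?_, ?_⟩, ?_⟩
  · rw [setIntegral_Ioo_prod_fst_mul_weight (fun x => g x ^ 2)]
    positivity
  · simp only [hderiv, deriv_const', ne_eq, OfNat.ofNat_ne_zero, not_false_eq_true, zero_pow,
      add_zero]
    rw [setIntegral_Ioo_prod_fst_mul_weight (fun x => g' x ^ 2),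
      setIntegral_Ioo_prod_fst_mul_weight (fun x => g x ^ 2),
      hg.integral_deriv_sq_mul_weight hρ hg' hab.le]
    field_simp
  · rintro q ⟨v, hv, hvmean, hvnorm, rfl⟩
    have hpos := lt_of_le_of_ne (setIntegral_nonneg (measurableSet_Ioo.prod measurableSet_Ioo)
      fun p _ => mul_nonneg (sq_nonneg (v p)) (mul_nonneg (hρ0 p.1) (hρ0 p.2))) (Ne.symm hvnorm)
    rw [le_div_iff₀ hpos]
    exact (hg.poincareInequality hρ hρ0 hμ.le hac.le hcb hgc hg'c hg0).prod hμ.le hρ hρ0 hmass hv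
      hvmean

end Tensorization

noncomputable def hermite5 (x : ℝ) : ℝ := x ^ 5 - 10 * x ^ 3 + 15 * x

noncomputable def hermite5' (x : ℝ) : ℝ := 5 * x ^ 4 - 30 * x ^ 2 + 15

theorem hasDerivAt_hermite5 (x : ℝ) : HasDerivAt hermite5 (hermite5' x) x := by
  refine (((hasDerivAt_pow 5 x).sub ((hasDerivAt_pow 3 x).const_mul 10)).add
    ((hasDerivAt_id x).const_mul 15)).congr_deriv ?_
  rw [hermite5']
  push_cast
  ring

theorem hasDerivAt_hermite5' (x : ℝ) :
    HasDerivAt hermite5' (x * hermite5' x - 5 * hermite5 x) x := by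
  refine ((((hasDerivAt_pow 4 x).const_mul 5).sub
    ((hasDerivAt_pow 2 x).const_mul 30)).add_const 15).congr_deriv ?_
  rw [hermite5', hermite5]
  push_cast
  ring

theorem hasDerivAt_gaussianPDFReal_zero_one (x : ℝ) :
    HasDerivAt (gaussianPDFReal 0 1) (-x * gaussianPDFReal 0 1 x) x := by
  have hfun : gaussianPDFReal 0 1 = fun t => (√(2 * π))⁻¹ * exp (-t ^ 2 / 2) := by
    ext t
    simp [gaussianPDFReal]
  rw [hfun]
  refine ((((hasDerivAt_pow 2 x).neg).div_const 2).exp.const_mul _).congr_deriv ?_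
  simp only [Pi.neg_apply]
  push_cast
  ring

theorem continuous_gaussianPDFReal_zero_one : Continuous (gaussianPDFReal 0 1) :=
  continuous_iff_continuousAt.2 fun x => (hasDerivAt_gaussianPDFReal_zero_one x).continuousAt

theorem gaussianPDFReal_zero_one_mul (x y : ℝ) :
    gaussianPDFReal 0 1 x * gaussianPDFReal 0 1 y = (2 * π)⁻¹ * exp (-(x ^ 2 + y ^ 2) / 2) := by
  simp only [gaussianPDFReal, NNReal.coe_one, mul_one, sub_zero]
  rw [mul_mul_mul_comm, ← mul_inv, ← Real.sqrt_mul (by positivity),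
    Real.sqrt_mul_self (by positivity), ← Real.exp_add]
  ring_nf

theorem sqrt_three_sub_sqrt_six_lt : √(3 - √6) < √(5 - √10) := by
  have h6 : √6 ^ 2 = 6 := Real.sq_sqrt (by norm_num)
  have h10 : √10 < 2 + √6 := by
    rw [Real.sqrt_lt' (by positivity)]
    nlinarith [Real.sqrt_pos.2 (by norm_num : (0 : ℝ) < 6)]
  apply Real.sqrt_lt_sqrt <;> nlinarith

theorem lt_sqrt_three_add_sqrt_six : √(5 - √10) < √(3 + √6) := by
  have h6 : √6 ^ 2 = 6 := Real.sq_sqrt (by norm_num)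
  have h10 : √10 ^ 2 = 10 := Real.sq_sqrt (by norm_num)
  apply Real.sqrt_lt_sqrt <;> nlinarith [Real.sqrt_nonneg 6, Real.sqrt_nonneg 10]

theorem hermite5'_eq_zero_of_sq_eq {x : ℝ} (hx : x ^ 2 = 3 - √6 ∨ x ^ 2 = 3 + √6) :
    hermite5' x = 0 := by
  have h6 : √6 ^ 2 = 6 := Real.sq_sqrt (by norm_num)
  have hfac : hermite5' x = 5 * ((x ^ 2 - 3) ^ 2 - √6 ^ 2) := by rw [hermite5', h6]; ring
  rcases hx with hx | hx <;> rw [hfac, hx] <;> ring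

theorem hermite5_eq_mul (x : ℝ) :
    hermite5 x = x * (x ^ 2 - (5 - √10)) * (x ^ 2 - (5 + √10)) := by
  have h10 : √10 ^ 2 = 10 := Real.sq_sqrt (by norm_num)
  rw [hermite5]
  linear_combination x * h10

theorem sq_sqrt_five_sub_sqrt_ten : √(5 - √10) ^ 2 = 5 - √10 := by
  have h10 : √10 ^ 2 = 10 := Real.sq_sqrt (by norm_num)
  exact Real.sq_sqrt (by nlinarith [Real.sqrt_nonneg 10])

theorem hermite5_sqrt_five_sub_sqrt_ten : hermite5 √(5 - √10) = 0 := by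
  rw [hermite5_eq_mul, sq_sqrt_five_sub_sqrt_ten, sub_self, mul_zero, zero_mul]

theorem hermite5'_sqrt_five_sub_sqrt_ten_ne_zero : hermite5' √(5 - √10) ≠ 0 := by
  have h10 : √10 ^ 2 = 10 := Real.sq_sqrt (by norm_num)
  have hc4 : √(5 - √10) ^ 4 = (√(5 - √10) ^ 2) ^ 2 := by ring
  rw [hermite5', hc4, sq_sqrt_five_sub_sqrt_ten]
  nlinarith [Real.sqrt_nonneg 10]

theorem hermite5_ne_zero {x : ℝ} (hx : x ∈ Icc √(3 - √6) √(3 + √6)) (hxc : x ≠ √(5 - √10)) :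
    hermite5 x ≠ 0 := by
  have h6 : √6 ^ 2 = 6 := Real.sq_sqrt (by norm_num)
  have h10 : √10 ^ 2 = 10 := Real.sq_sqrt (by norm_num)
  have hx0 : 0 < x := (Real.sqrt_pos.2 (by nlinarith [Real.sqrt_nonneg 6])).trans_le hx.1
  have hxβ : x ^ 2 ≤ 3 + √6 := by
    rw [← Real.sq_sqrt (by positivity : (0 : ℝ) ≤ 3 + √6)]
    exact pow_le_pow_left₀ hx0.le hx.2 2
  rw [hermite5_eq_mul]
  refine mul_ne_zero (mul_ne_zero hx0.ne' fun h => hxc ?_) ?_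
  · rw [← sub_eq_zero.1 h, Real.sqrt_sq hx0.le]
  · nlinarith [Real.sqrt_nonneg 6, Real.sqrt_nonneg 10]

theorem isNeumannEigenfunction_hermite5 :
    IsNeumannEigenfunction (gaussianPDFReal 0 1) hermite5 hermite5' 5 √(3 - √6) √(3 + √6) where
  hasDerivAt := hasDerivAt_hermite5
  hasDerivAt_weight_mul x := by
    refine ((hasDerivAt_gaussianPDFReal_zero_one x).mul (hasDerivAt_hermite5' x)).congr_deriv ?_
    ring
  deriv_left := hermite5'_eq_zero_of_sq_eq <| .inl <| Real.sq_sqrt <| sub_nonneg.2 <|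
    (Real.sqrt_le_left (by norm_num)).2 (by norm_num)
  deriv_right := hermite5'_eq_zero_of_sq_eq <| .inr <| Real.sq_sqrt (by positivity)

theorem neumann_eigenvalue_square_eq_five
    (α β : ℝ) (hα : α = Real.sqrt (3 - Real.sqrt 6)) (hβ : β = Real.sqrt (3 + Real.sqrt 6))
    (T : Set (ℝ × ℝ)) (hT : T = Ioo α β ×ˢ Ioo α β)
    (φ : ℝ × ℝ → ℝ) (hφ : ∀ p, φ p = (2 * Real.pi)⁻¹ * Real.exp (-(p.1 ^ 2 + p.2 ^ 2) / 2))
    (u : ℝ × ℝ → ℝ) (hu : ∀ p, u p = p.1 ^ 5 - 10 * p.1 ^ 3 + 15 * p.1) :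
    IsLeast { q : ℝ | ∃ v : ℝ × ℝ → ℝ, ContDiff ℝ 1 v ∧
        (∫ p in T, v p * φ p) = 0 ∧
        (∫ p in T, (v p) ^ 2 * φ p) ≠ 0 ∧
        q = (∫ p in T,
              ((deriv (fun x => v (x, p.2)) p.1) ^ 2 +
                (deriv (fun y => v (p.1, y)) p.2) ^ 2) * φ p) /
            (∫ p in T, (v p) ^ 2 * φ p) } 5 ∧
    (∫ p in T, u p * φ p) = 0 ∧
    (∀ p ∈ T,
      -(deriv (deriv (fun x => u (x, p.2))) p.1 +
          deriv (deriv (fun y => u (p.1, y))) p.2) +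
        (p.1 * deriv (fun x => u (x, p.2)) p.1 +
          p.2 * deriv (fun y => u (p.1, y)) p.2) = 5 * u p) ∧
    (∀ y : ℝ, deriv (fun x => u (x, y)) α = 0 ∧ deriv (fun x => u (x, y)) β = 0) ∧
    (∀ x y : ℝ, deriv (fun y' => u (x, y')) y = 0) := by
  have hφρ : φ = fun p => gaussianPDFReal 0 1 p.1 * gaussianPDFReal 0 1 p.2 :=
    funext fun p => by rw [hφ, gaussianPDFReal_zero_one_mul]
  have hug : u = fun p => hermite5 p.1 := funext hu
  subst hα hβ hT hφρ hug
  have hg := isNeumannEigenfunction_hermite5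
  have hderiv : deriv hermite5 = hermite5' := funext fun x => (hasDerivAt_hermite5 x).deriv
  refine ⟨hg.isLeast_rayleighQuotient continuous_gaussianPDFReal_zero_one
      (gaussianPDFReal_pos 0 1 · one_ne_zero) (by unfold hermite5'; fun_prop) (by norm_num)
      sqrt_three_sub_sqrt_six_lt lt_sqrt_three_add_sqrt_six.le hermite5_sqrt_five_sub_sqrt_ten
      hermite5'_sqrt_five_sub_sqrt_ten_ne_zero fun _ hx hxc => hermite5_ne_zero hx hxc,
    hg.setIntegral_prod_fst_mul_weight_eq_zero continuous_gaussianPDFReal_zero_one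
      (by norm_num) (sqrt_three_sub_sqrt_six_lt.trans lt_sqrt_three_add_sqrt_six).le,
    fun p _ => ?_, fun _ => ⟨?_, ?_⟩, fun _ _ => deriv_const _ (hermite5 _)⟩
  · simp only [hderiv, deriv_const', (hasDerivAt_hermite5' p.1).deriv]
    ring
  · simpa only [hderiv] using hg.deriv_left
  · simpa only [hderiv] using hg.deriv_right
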